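/- Let γ ↦ u_n(γ) = ψ(sup_{i∈A}⟨φ_i,γ⟩) with ψ smooth, 1_{[2,∞)} ≤ ψ ≤ 1_{[1,∞)}, A = ℤ^d ∩ [−na,na]^d, and φ_i(x) = ∏_k φ(nx_k − i_k) with 1_{[0,1]} ≤ φ ≤ 1_{[−1/2,3/2)}. Then for every ℤ₊-valued Radon measure γ on ℝ^d, u_n(γ) → 1_N(γ) as n → ∞, where N = {γ : sup_{x∈[−a,a]^d} γ({x}) ≥ 2}. -/

import Mathlib

open MeasureTheory Set ENNReal Filter

namespace Stmt16Aux

variable {d : ℕ}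

/-- The closed cube of side `2/m` associated to the lattice point `i`. -/
def cube (m : ℕ) (i : Fin d → ℤ) : Set (EuclideanSpace ℝ (Fin d)) :=
  {x | ∀ k, x k ∈ Set.Icc (((i k : ℝ) - 1/2)/m) (((i k : ℝ) + 3/2)/m)}

lemma norm_le_of_forall {x : EuclideanSpace ℝ (Fin d)} {B : ℝ} (hB : 0 ≤ B)
    (h : ∀ k, |x k| ≤ B) : ‖x‖ ≤ Real.sqrt d * B := by
  rw [EuclideanSpace.norm_eq]
  have hsum : ∑ k, ‖x k‖ ^ 2 ≤ ∑ _k : Fin d, B ^ 2 :=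
    Finset.sum_le_sum fun k _ => by
      rw [Real.norm_eq_abs]
      exact pow_le_pow_left₀ (abs_nonneg _) (h k) 2
  calc Real.sqrt (∑ k, ‖x k‖ ^ 2) ≤ Real.sqrt (∑ _k : Fin d, B ^ 2) := Real.sqrt_le_sqrt hsum
    _ = Real.sqrt ((d : ℝ) * B ^ 2) := by
        rw [Finset.sum_const, Finset.card_univ, Fintype.card_fin, nsmul_eq_mul]
    _ = Real.sqrt d * B := by
        rw [Real.sqrt_mul (Nat.cast_nonneg d), Real.sqrt_sq hB]

lemma dist_le_of_mem_cube {m : ℕ} (hm : 1 ≤ m) {i : Fin d → ℤ}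
    {z c : EuclideanSpace ℝ (Fin d)} (hz : z ∈ cube m i) (hc : ∀ k, c k = (i k : ℝ) / m) :
    dist z c ≤ Real.sqrt d * (3/(2*m)) := by
  have hm0 : (0:ℝ) < m := by exact_mod_cast hm
  rw [dist_eq_norm]
  apply norm_le_of_forall (by positivity)
  intro k
  have h1 := (hz k).1
  have h2 := (hz k).2
  have hsub : (z - c) k = z k - c k := by simp
  set t : ℝ := 1/(2*m) with ht
  have ht0 : 0 ≤ t := by positivity
  have e1 : ((i k : ℝ) - 1/2)/m = (i k : ℝ)/m - t := by rw [ht]; field_simp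
  have e2 : ((i k : ℝ) + 3/2)/m = (i k : ℝ)/m + 3*t := by rw [ht]; field_simp
  have e3 : 3/(2*(m:ℝ)) = 3*t := by rw [ht]; ring
  rw [hsub, hc k, e3, abs_le]
  rw [e1] at h1
  rw [e2] at h2
  constructor <;> linarith

lemma mem_cube_iff {m : ℕ} (hm : 1 ≤ m) {i : Fin d → ℤ} {x : EuclideanSpace ℝ (Fin d)} :
    x ∈ cube m i ↔ ∀ k, -(1/2 : ℝ) ≤ (m:ℝ) * x k - i k ∧ (m:ℝ) * x k - i k ≤ 3/2 := by
  have hm0 : (0:ℝ) < m := by exact_mod_cast hm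
  simp only [cube, mem_setOf_eq, mem_Icc]
  refine forall_congr' fun k => ?_
  rw [div_le_iff₀ hm0, le_div_iff₀ hm0]
  constructor <;> rintro ⟨h1, h2⟩ <;> constructor <;> nlinarith

lemma isClosed_cube (m : ℕ) (i : Fin d → ℤ) : IsClosed (cube m i) := by
  have : cube m i = ⋂ k, (fun x : EuclideanSpace ℝ (Fin d) => x k) ⁻¹'
      Set.Icc (((i k : ℝ) - 1/2)/m) (((i k : ℝ) + 3/2)/m) := by
    ext x; simp [cube, Set.mem_iInter]
  rw [this]
  exact isClosed_iInter fun k => isClosed_Icc.preimage (PiLp.continuous_apply 2 _ k)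

lemma cube_subset_closedBall {m : ℕ} (hm : 1 ≤ m) {i : Fin d → ℤ}
    {c : EuclideanSpace ℝ (Fin d)} (hc : ∀ k, c k = (i k : ℝ) / m) :
    cube m i ⊆ Metric.closedBall c (Real.sqrt d * (3/(2*m))) :=
  fun _z hz => Metric.mem_closedBall.2 (dist_le_of_mem_cube hm hz hc)

lemma isCompact_cube {m : ℕ} (hm : 1 ≤ m) (i : Fin d → ℤ) : IsCompact (cube m i) := by
  apply Metric.isCompact_of_isClosed_isBounded (isClosed_cube m i)
  exact Metric.isBounded_closedBall.subset
    (cube_subset_closedBall hm (c := (WithLp.equiv 2 (Fin d → ℝ)).symm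
      (fun k => (i k : ℝ) / m)) (fun k => rfl))

section gfun

variable (φ : ℝ → ℝ) (m : ℕ) (i : Fin d → ℤ)

/-- The bump function `x ↦ ∏ k φ(m xₖ − iₖ)`. -/
noncomputable def gfun (x : EuclideanSpace ℝ (Fin d)) : ℝ :=
  ∏ k, φ ((m : ℝ) * x k - i k)

variable {φ m i}

lemma gfun_nonneg (h0 : ∀ t, 0 ≤ φ t) (x : EuclideanSpace ℝ (Fin d)) : 0 ≤ gfun φ m i x :=
  Finset.prod_nonneg fun k _ => h0 _

lemma gfun_le_one (h0 : ∀ t, 0 ≤ φ t) (h1 : ∀ t, φ t ≤ 1) (x : EuclideanSpace ℝ (Fin d)) :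
    gfun φ m i x ≤ 1 :=
  Finset.prod_le_one (fun k _ => h0 _) (fun k _ => h1 _)

lemma gfun_zero_outside (hz : ∀ t : ℝ, t ∉ Set.Ico (-(1/2):ℝ) (3/2) → φ t = 0)
    (hm : 1 ≤ m) {x : EuclideanSpace ℝ (Fin d)} (hx : x ∉ cube m i) : gfun φ m i x = 0 := by
  rw [mem_cube_iff hm] at hx
  push_neg at hx
  obtain ⟨k, hk⟩ := hx
  refine Finset.prod_eq_zero (Finset.mem_univ k) (hz _ ?_)
  intro hmem
  rw [Set.mem_Ico] at hmem
  exact absurd (hk hmem.1) (not_lt.2 hmem.2.le)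

lemma gfun_continuous (hc : Continuous φ) : Continuous (gfun φ m i) :=
  continuous_finset_prod _ fun k _ =>
    hc.comp (((continuous_const.mul (PiLp.continuous_apply 2 _ k)).sub continuous_const))

lemma gfun_integrable (hc : Continuous φ)
    (hz : ∀ t : ℝ, t ∉ Set.Ico (-(1/2):ℝ) (3/2) → φ t = 0) (hm : 1 ≤ m)
    (γ : Measure (EuclideanSpace ℝ (Fin d))) [IsLocallyFiniteMeasure γ] :
    Integrable (gfun φ m i) γ :=
  (gfun_continuous hc).integrable_of_hasCompactSupport
    (HasCompactSupport.intro (isCompact_cube hm i) fun _x hx => gfun_zero_outside hz hm hx)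

lemma integral_gfun_le (hc : Continuous φ) (h0 : ∀ t, 0 ≤ φ t) (h1 : ∀ t, φ t ≤ 1)
    (hz : ∀ t : ℝ, t ∉ Set.Ico (-(1/2):ℝ) (3/2) → φ t = 0) (hm : 1 ≤ m)
    (γ : Measure (EuclideanSpace ℝ (Fin d))) [IsLocallyFiniteMeasure γ] :
    ∫ x, gfun φ m i x ∂γ ≤ (γ (cube m i)).toReal := by
  have hmeas : MeasurableSet (cube m i) := (isClosed_cube m i).measurableSet
  have hfin : γ (cube m i) < ⊤ := (isCompact_cube hm i).measure_lt_top
  have hind : Integrable (Set.indicator (cube m i) (fun _ => (1:ℝ))) γ :=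
    (integrable_indicator_iff hmeas).2 (integrableOn_const (C := (1:ℝ)) hfin.ne)
  calc ∫ x, gfun φ m i x ∂γ ≤ ∫ x, Set.indicator (cube m i) (fun _ => (1:ℝ)) x ∂γ := by
        refine integral_mono (gfun_integrable hc hz hm γ) hind fun x => ?_
        by_cases hx : x ∈ cube m i
        · rw [Set.indicator_of_mem hx]
          exact gfun_le_one h0 h1 x
        · rw [Set.indicator_of_notMem hx, gfun_zero_outside hz hm hx]
    _ = (γ (cube m i)).toReal := by
        rw [integral_indicator hmeas, setIntegral_const, smul_eq_mul, mul_one, measureReal_def]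

end gfun

end Stmt16Aux

open Stmt16Aux

/-- Pointwise convergence `u_n(γ) = ψ(sup_{i∈A_n} ⟨φ_i, γ⟩) → 1_N(γ)` where
`N = {γ | ∃ x ∈ [-a,a]^d, γ({x}) ≥ 2}`, for every `ℤ₊`-valued locally finite
measure `γ` on `ℝ^d`. -/
theorem stmt16 (d a : ℕ)
    (φ : ℝ → ℝ) (hφ : ContDiff ℝ (⊤ : ℕ∞) φ)
    (hφ_lb : ∀ t : ℝ, Set.indicator (Set.Icc (0:ℝ) 1) 1 t ≤ φ t)
    (hφ_ub : ∀ t : ℝ, φ t ≤ Set.indicator (Set.Ico (-(1/2):ℝ) (3/2)) 1 t)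
    (ψ : ℝ → ℝ) (hψ : ContDiff ℝ (⊤ : ℕ∞) ψ)
    (hψ_lb : ∀ t : ℝ, Set.indicator (Set.Ici (2:ℝ)) 1 t ≤ ψ t)
    (hψ_ub : ∀ t : ℝ, ψ t ≤ Set.indicator (Set.Ici (1:ℝ)) 1 t)
    (γ : Measure (EuclideanSpace ℝ (Fin d))) [IsLocallyFiniteMeasure γ]
    (hZ : ∀ s : Set (EuclideanSpace ℝ (Fin d)), MeasurableSet s →
      γ s ∈ Set.range ((↑) : ℕ → ℝ≥0∞) ∪ {⊤}) :
    Tendsto (fun m : ℕ =>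
        ψ (⨆ i ∈ Fintype.piFinset (fun _ : Fin d => Finset.Icc (-(m * a : ℤ)) (m * a)),
          ∫ x, (∏ k, φ ((m : ℝ) * x k - i k)) ∂γ))
      atTop
      (nhds ({γ' : Measure (EuclideanSpace ℝ (Fin d)) |
          ∃ x : EuclideanSpace ℝ (Fin d), (∀ k, |x k| ≤ (a : ℝ)) ∧ 2 ≤ γ' {x}}.indicator
        (fun _ => (1 : ℝ)) γ)) := by
  classical
  -- basic facts about φ
  have hφ0 : ∀ t, 0 ≤ φ t := fun t =>
    le_trans (Set.indicator_nonneg (fun _ _ => zero_le_one) t) (hφ_lb t)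
  have hφ1 : ∀ t, φ t ≤ 1 := fun t =>
    (hφ_ub t).trans (Set.indicator_apply_le' (fun _ => le_refl 1) (fun _ => zero_le_one))
  have hφz : ∀ t : ℝ, t ∉ Set.Ico (-(1/2):ℝ) (3/2) → φ t = 0 := fun t ht =>
    le_antisymm ((hφ_ub t).trans_eq (Set.indicator_of_notMem ht _)) (hφ0 t)
  have hφone : ∀ t ∈ Set.Icc (0:ℝ) 1, 1 ≤ φ t := fun t ht => by
    have := hφ_lb t
    rwa [Set.indicator_of_mem ht] at this
  -- basic facts about ψ
  have hψ0 : ∀ t, 0 ≤ ψ t := fun t =>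
    le_trans (Set.indicator_nonneg (fun _ _ => zero_le_one) t) (hψ_lb t)
  have hψ1 : ∀ t, ψ t ≤ 1 := fun t =>
    (hψ_ub t).trans (Set.indicator_apply_le' (fun _ => le_refl 1) (fun _ => zero_le_one))
  have hψlt : ∀ t : ℝ, t < 1 → ψ t = 0 := fun t ht =>
    le_antisymm ((hψ_ub t).trans_eq (Set.indicator_of_notMem (by simp [ht.not_ge]) _)) (hψ0 t)
  have hψone : ∀ t : ℝ, 2 ≤ t → ψ t = 1 := fun t ht => by
    refine le_antisymm ((hψ_ub t).trans_eq (Set.indicator_of_mem (by simp; linarith) _)) ?_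
    have := hψ_lb t
    rwa [Set.indicator_of_mem (Set.mem_Ici.2 ht)] at this
  have hψle : ∀ t : ℝ, t ≤ 1 → ψ t = 0 := by
    intro t ht
    rcases lt_or_eq_of_le ht with h | h
    · exact hψlt t h
    · subst h
      have h1 : Tendsto ψ (nhdsWithin 1 (Set.Iio 1)) (nhds (ψ 1)) :=
        (hψ.continuous.tendsto 1).mono_left nhdsWithin_le_nhds
      have h2 : Tendsto ψ (nhdsWithin 1 (Set.Iio 1)) (nhds 0) := by
        refine Tendsto.congr' ?_ tendsto_const_nhds
        filter_upwards [self_mem_nhdsWithin] with s hs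
        exact (hψlt s hs).symm
      exact tendsto_nhds_unique h1 h2
  set A : ℕ → Finset (Fin d → ℤ) :=
    fun m => Fintype.piFinset (fun _ : Fin d => Finset.Icc (-(m * a : ℤ)) (m * a)) with hA
  set S : ℕ → ℝ := fun m => ⨆ i ∈ A m, ∫ x, (∏ k, φ ((m : ℝ) * x k - i k)) ∂γ with hS
  have hbdd : ∀ m, BddAbove (Set.range fun i : Fin d → ℤ =>
      ⨆ _ : i ∈ A m, ∫ x, (∏ k, φ ((m : ℝ) * x k - i k)) ∂γ) := by
    intro m
    refine Set.Finite.bddAbove (Set.Finite.subset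
      (((A m).finite_toSet.image (fun i => ∫ x, (∏ k, φ ((m : ℝ) * x k - i k)) ∂γ)).insert 0) ?_)
    rintro _ ⟨i, rfl⟩
    dsimp only
    by_cases h : i ∈ A m
    · rw [ciSup_pos h]
      exact Set.mem_insert_iff.2 (Or.inr ⟨i, h, rfl⟩)
    · have : IsEmpty (i ∈ A m) := ⟨h⟩
      rw [Real.iSup_of_isEmpty]
      exact Set.mem_insert _ _
  set N : Set (Measure (EuclideanSpace ℝ (Fin d))) :=
    {γ' | ∃ x : EuclideanSpace ℝ (Fin d), (∀ k, |x k| ≤ (a : ℝ)) ∧ 2 ≤ γ' {x}} with hNdef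
  by_cases hN : ∃ x : EuclideanSpace ℝ (Fin d), (∀ k, |x k| ≤ (a : ℝ)) ∧ 2 ≤ γ {x}
  · -- the measure has a big atom in the cube: the value tends to 1
    rw [Set.indicator_of_mem (show γ ∈ N from hN)]
    obtain ⟨x, hxa, hx2⟩ := hN
    show Tendsto _ atTop (nhds (1:ℝ))
    refine Tendsto.congr' ?_ tendsto_const_nhds
    filter_upwards [eventually_ge_atTop 1] with m hm
    have hm0 : (0:ℝ) < m := by exact_mod_cast hm
    set i₀ : Fin d → ℤ := fun k => ⌊(m : ℝ) * x k⌋ with hi₀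
    have hmem : i₀ ∈ A m := by
      rw [hA, Fintype.mem_piFinset]
      intro k
      rw [Finset.mem_Icc]
      constructor
      · rw [Int.le_floor]
        push_cast
        have := (abs_le.1 (hxa k)).1
        nlinarith
      · have : ((m : ℝ)) * x k ≤ ((m * a : ℤ) : ℝ) := by
          push_cast
          have := (abs_le.1 (hxa k)).2
          nlinarith
        calc i₀ k ≤ ⌊((m * a : ℤ) : ℝ)⌋ := Int.floor_mono this
          _ = (m * a : ℤ) := Int.floor_intCast _
    -- the integral against φ_{i₀} is at least 2
    have hsing : γ {x} ≠ ⊤ := (isCompact_singleton.measure_lt_top).ne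
    have hlow : 2 ≤ ∫ z, gfun φ m i₀ z ∂γ := by
      have hind : Integrable (Set.indicator {x} (fun _ => (1:ℝ))) γ :=
        (integrable_indicator_iff (measurableSet_singleton x)).2
          (integrableOn_const (C := (1:ℝ)) hsing)
      have hmono : ∫ z, Set.indicator {x} (fun _ => (1:ℝ)) z ∂γ ≤ ∫ z, gfun φ m i₀ z ∂γ := by
        refine integral_mono hind (gfun_integrable hφ.continuous hφz hm γ) fun z => ?_
        by_cases hz : z = x
        · subst hz
          rw [Set.indicator_of_mem (Set.mem_singleton z)]
          show (1:ℝ) ≤ ∏ k, φ ((m : ℝ) * z k - i₀ k)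
          have hone : (1:ℝ) = ∏ _k : Fin d, (1:ℝ) := by simp
          rw [hone]
          refine Finset.prod_le_prod (fun k _ => zero_le_one) ?_
          intro k _
          refine hφone _ ?_
          constructor
          · have := Int.floor_le ((m : ℝ) * z k)
            rw [hi₀]; simp only []
            linarith
          · have := Int.lt_floor_add_one ((m : ℝ) * z k)
            rw [hi₀]; simp only []
            push_cast at this ⊢
            linarith
        · rw [Set.indicator_of_notMem (show z ∉ ({x} : Set _) by simpa using hz)]
          exact gfun_nonneg hφ0 z
      have heq : ∫ z, Set.indicator {x} (fun _ => (1:ℝ)) z ∂γ = (γ {x}).toReal := by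
        rw [integral_indicator (measurableSet_singleton x), setIntegral_const, smul_eq_mul,
          mul_one, measureReal_def]
      have h2 : (2:ℝ) ≤ (γ {x}).toReal := by
        have := ENNReal.toReal_mono hsing hx2
        simpa using this
      linarith [heq ▸ hmono]
    have hS2 : 2 ≤ S m := by
      rw [hS]
      refine le_trans ?_ (le_ciSup (hbdd m) i₀)
      rw [ciSup_pos hmem]
      exact hlow
    exact (hψone _ hS2).symm
  · -- no big atom in the cube: the value tends to 0
    rw [Set.indicator_of_notMem (show γ ∉ N from hN)]
    -- Key step: eventually all cubes have measure at most 1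
    have key : ∀ᶠ m in atTop, ∀ i ∈ A m, γ (cube m i) ≤ 1 := by
      by_contra hcon
      rw [Filter.not_eventually] at hcon
      have hcon' : ∃ᶠ m in atTop, (∃ i ∈ A m, 2 ≤ γ (cube m i)) ∧ 1 ≤ m := by
        refine (hcon.and_eventually (eventually_ge_atTop 1)).mono ?_
        rintro m ⟨hm1, hm2⟩
        refine ⟨?_, hm2⟩
        push_neg at hm1
        obtain ⟨i, hiA, hiγ⟩ := hm1
        refine ⟨i, hiA, ?_⟩
        rcases hZ (cube m i) (isClosed_cube m i).measurableSet with ⟨n, hn⟩ | htop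
        · rw [← hn] at hiγ ⊢
          have h1 : 1 < n := by exact_mod_cast hiγ
          exact_mod_cast h1
        · rw [Set.mem_singleton_iff] at htop
          rw [htop]
          exact le_top
      obtain ⟨u, humono, hu⟩ := Filter.extraction_of_frequently_atTop hcon'
      have H : ∀ n, ∃ i, i ∈ A (u n) ∧ 2 ≤ γ (cube (u n) i) := by
        intro n
        obtain ⟨⟨i, hi1, hi2⟩, _⟩ := hu n
        exact ⟨i, hi1, hi2⟩
      choose i hiA hiγ using H
      have hu1 : ∀ n, 1 ≤ u n := fun n => (hu n).2
      set c : ℕ → EuclideanSpace ℝ (Fin d) :=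
        fun n => (WithLp.equiv 2 (Fin d → ℝ)).symm (fun k => (i n k : ℝ) / (u n)) with hcdef
      have hck : ∀ n k, c n k = (i n k : ℝ) / (u n) := fun n k => rfl
      set K : Set (EuclideanSpace ℝ (Fin d)) := {x | ∀ k, |x k| ≤ (a : ℝ)} with hK
      have hcK : ∀ n, c n ∈ K := by
        intro n
        intro k
        have hik := (hiA n)
        rw [Fintype.mem_piFinset] at hik
        have := hik k
        rw [Finset.mem_Icc] at this
        have hun : (0:ℝ) < u n := by exact_mod_cast hu1 n
        rw [hck, abs_div, abs_of_pos hun, div_le_iff₀ hun]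
        have h1 : ((i n k : ℝ)) ≤ (u n : ℝ) * a := by exact_mod_cast this.2
        have h2 : -((u n : ℝ) * a) ≤ (i n k : ℝ) := by exact_mod_cast this.1
        rw [abs_le]
        constructor <;> nlinarith
      have hKcomp : IsCompact K := by
        apply Metric.isCompact_of_isClosed_isBounded
        · have : K = ⋂ k, (fun x : EuclideanSpace ℝ (Fin d) => x k) ⁻¹'
              Set.Icc (-(a:ℝ)) (a:ℝ) := by
            ext x
            simp [hK, Set.mem_iInter, abs_le]
          rw [this]
          exact isClosed_iInter fun k => isClosed_Icc.preimage (PiLp.continuous_apply 2 _ k)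
        · rw [Metric.isBounded_iff_subset_closedBall 0]
          refine ⟨Real.sqrt d * a, fun x hx => ?_⟩
          rw [Metric.mem_closedBall, dist_zero_right]
          exact norm_le_of_forall (Nat.cast_nonneg a) hx
      obtain ⟨y, hyK, σ, hσmono, hσlim⟩ := hKcomp.tendsto_subseq hcK
      -- show the limit point is a big atom, contradiction
      refine hN ⟨y, hyK, ?_⟩
      have hball : ∀ n : ℕ, (2:ℝ≥0∞) ≤ γ (Metric.closedBall y (1/(n+1))) := by
        intro n
        have hpos : (0:ℝ) < 1/(n+1) := by positivity
        -- dist(c (σ t), y) + sqrt d * 3/(2 u (σ t)) → 0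
        have hd1 : Tendsto (fun t => dist (c (σ t)) y) atTop (nhds 0) :=
          tendsto_iff_dist_tendsto_zero.1 hσlim
        have hd2 : Tendsto (fun t : ℕ => Real.sqrt d * (3/(2 * (u (σ t) : ℝ)))) atTop
            (nhds 0) := by
          have h1 : Tendsto (fun t : ℕ => ((u (σ t) : ℝ))) atTop atTop := by
            apply tendsto_natCast_atTop_atTop.comp
            exact (humono.comp hσmono).tendsto_atTop
          have h2 : Tendsto (fun t : ℕ => 2 * (u (σ t) : ℝ)) atTop atTop :=
            h1.const_mul_atTop (by norm_num)
          have h3 : Tendsto (fun t : ℕ => 3/(2 * (u (σ t) : ℝ))) atTop (nhds 0) :=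
            h2.const_div_atTop 3
          simpa using (tendsto_const_nhds (x := Real.sqrt d)).mul h3
        have hsum : Tendsto (fun t => dist (c (σ t)) y +
            Real.sqrt d * (3/(2 * (u (σ t) : ℝ)))) atTop (nhds 0) := by
          simpa using hd1.add hd2
        have hev : ∀ᶠ t in atTop, dist (c (σ t)) y +
            Real.sqrt d * (3/(2 * (u (σ t) : ℝ))) < 1/(n+1) :=
          hsum.eventually (gt_mem_nhds hpos)
        obtain ⟨t, ht⟩ := hev.exists
        refine le_trans (hiγ (σ t)) (measure_mono ?_)
        intro z hz
        rw [Metric.mem_closedBall]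
        have hd := dist_le_of_mem_cube (hu1 (σ t)) hz (hck (σ t))
        calc dist z y ≤ dist z (c (σ t)) + dist (c (σ t)) y := dist_triangle _ _ _
          _ ≤ Real.sqrt d * (3/(2 * (u (σ t) : ℝ))) + dist (c (σ t)) y := by
              exact add_le_add_left hd _
          _ ≤ 1/(n+1) := by linarith
      -- conclude γ {y} ≥ 2 by continuity from above
      have hiInter : (⋂ n : ℕ, Metric.closedBall y (1/(n+1))) = {y} := by
        ext z
        simp only [Set.mem_iInter, Metric.mem_closedBall, Set.mem_singleton_iff]
        constructor
        · intro h
          by_contra hzy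
          have hdpos : 0 < dist z y := dist_pos.2 hzy
          obtain ⟨n, hn⟩ := exists_nat_one_div_lt hdpos
          exact absurd (h n) (by push_cast at hn ⊢; linarith)
        · rintro rfl
          intro n
          simp only [dist_self]
          positivity
      have htend : Tendsto (fun n : ℕ => γ (Metric.closedBall y (1/(n+1)))) atTop
          (nhds (γ (⋂ n : ℕ, Metric.closedBall y (1/(n+1))))) := by
        refine tendsto_measure_iInter_atTop (fun n => measurableSet_closedBall.nullMeasurableSet)
          (fun p q hpq => Metric.closedBall_subset_closedBall ?_) ⟨0, ?_⟩
        · apply one_div_le_one_div_of_le (by positivity)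
          have : (p:ℝ) ≤ q := Nat.cast_le.2 hpq
          push_cast
          linarith
        · exact ((isCompact_closedBall y _).measure_lt_top).ne
      rw [hiInter] at htend
      exact ge_of_tendsto' htend hball
    show Tendsto _ atTop (nhds (0:ℝ))
    refine Tendsto.congr' ?_ tendsto_const_nhds
    filter_upwards [key, eventually_ge_atTop 1] with m hcube hm
    have hS1 : S m ≤ 1 := by
      rw [hS]
      refine ciSup_le fun i => ?_
      refine Real.iSup_le (fun hiA => ?_) zero_le_one
      have h1 : ∫ x, gfun φ m i x ∂γ ≤ (γ (cube m i)).toReal :=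
        integral_gfun_le hφ.continuous hφ0 hφ1 hφz hm γ
      have h2 : (γ (cube m i)).toReal ≤ 1 := by
        have := ENNReal.toReal_mono (by simp) (hcube i hiA)
        simpa using this
      exact h1.trans h2
    exact (hψle _ hS1).symm
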